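/- arXiv:2401.06993 — 13 statements merged into one kernel-verified Lean document; each statement's English description precedes it below -/
import Mathlib

section
/- In any metabelian Novikov algebra A, for all a,b,c,d,e in A, the element a*(b*(c*(d*e))) equals 0. -/
/-! In right symmetry for `(a, c, d*e)` the two terms that are products of squares vanish, so
`(a*(d*e))*c = -(a*(c*(d*e)))`. Left-multiplying by `b` and commuting left multiplications turns
the left side into `(a*(d*e))*(b*c) = 0` and the right side into `-(a*(b*(c*(d*e))))`. -/

namespace Novikov

variable {A : Type*} [NonUnitalNonAssocRing A]

theorem mul_mul_mul_mul_eq_zero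
    (lcom : ∀ a b c : A, a*(b*c) = b*(a*c))
    (metab : ∀ a b c d : A, (a*b)*(c*d) = 0) (x y z w : A) :
    x*((y*z)*w) = 0 := by
  rw [lcom, metab]

theorem mul_mul_mul_mul_eq_neg
    (lcom : ∀ a b c : A, a*(b*c) = b*(a*c))
    (rsym : ∀ a b c : A, (a*b)*c - a*(b*c) = (a*c)*b - a*(c*b))
    (metab : ∀ a b c d : A, (a*b)*(c*d) = 0) (x y z w : A) :
    (x*(y*z))*w = -(x*(w*(y*z))) := by
  have h := rsym x w (y*z)
  rw [metab, mul_mul_mul_mul_eq_zero lcom metab] at h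
  rw [← sub_zero ((x*(y*z))*w), ← h, zero_sub]

end Novikov

theorem stmt_0_general
    {A : Type*} [NonUnitalNonAssocRing A]
    (lcom : ∀ a b c : A, a*(b*c) = b*(a*c))
    (rsym : ∀ a b c : A, (a*b)*c - a*(b*c) = (a*c)*b - a*(c*b))
    (metab : ∀ a b c d : A, (a*b)*(c*d) = 0) :
    ∀ a b c d e : A, a*(b*(c*(d*e))) = 0 := by
  intro a b c d e
  calc a*(b*(c*(d*e))) = -(b*((a*(d*e))*c)) := by
        rw [lcom a b, Novikov.mul_mul_mul_mul_eq_neg lcom rsym metab, mul_neg, neg_neg]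
    _ = 0 := by rw [← lcom, metab, neg_zero]

/-- Setting: a nonassociative (nonunital) algebra over a field of characteristic 0. -/
theorem stmt_0 {K : Type*} [Field K] [CharZero K]
    {A : Type*} [NonUnitalNonAssocRing A] [Module K A]
    [SMulCommClass K A A] [IsScalarTower K A A]
    (lcom : ∀ a b c : A, a*(b*c) = b*(a*c))
    (rsym : ∀ a b c : A, (a*b)*c - a*(b*c) = (a*c)*b - a*(c*b))
    (metab : ∀ a b c d : A, (a*b)*(c*d) = 0) :
    ∀ a b c d e : A, a*(b*(c*(d*e))) = 0 :=
  stmt_0_general lcom rsym metab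
end

section
/- In any metabelian Novikov algebra A, for all a,b,c,d,e in A, the element a*(((b*c)*d)*e) equals 0. -/
theorem mul_mul_mul_mul_eq_zero_of_rightSymm_of_metabelian {A : Type*} [NonUnitalNonAssocRing A]
    (rsym : ∀ a b c : A, (a*b)*c - a*(b*c) = (a*c)*b - a*(c*b))
    (metab : ∀ a b c d : A, (a*b)*(c*d) = 0) (a b c d e : A) :
    ((a*b)*c)*(d*e) = 0 :=
  calc ((a*b)*c)*(d*e) = ((a*b)*c)*(d*e) - (a*b)*(c*(d*e)) := by rw [metab a b c, sub_zero]
    _ = ((a*b)*(d*e))*c - (a*b)*((d*e)*c) := rsym _ _ _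
    _ = 0 := by rw [metab, metab, zero_mul, sub_zero]

theorem stmt_1_general
    {A : Type*} [NonUnitalNonAssocRing A]
    (lcom : ∀ a b c : A, a*(b*c) = b*(a*c))
    (rsym : ∀ a b c : A, (a*b)*c - a*(b*c) = (a*c)*b - a*(c*b))
    (metab : ∀ a b c d : A, (a*b)*(c*d) = 0) :
    ∀ a b c d e : A, a*(((b*c)*d)*e) = 0 := by
  intro a b c d e
  rw [lcom]
  exact mul_mul_mul_mul_eq_zero_of_rightSymm_of_metabelian rsym metab b c d a e

/-- Setting: a nonassociative (nonunital) algebra over a field of characteristic 0. -/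
theorem stmt_1 {K : Type*} [Field K] [CharZero K]
    {A : Type*} [NonUnitalNonAssocRing A] [Module K A]
    [SMulCommClass K A A] [IsScalarTower K A A]
    (lcom : ∀ a b c : A, a*(b*c) = b*(a*c))
    (rsym : ∀ a b c : A, (a*b)*c - a*(b*c) = (a*c)*b - a*(c*b))
    (metab : ∀ a b c d : A, (a*b)*(c*d) = 0) :
    ∀ a b c d e : A, a*(((b*c)*d)*e) = 0 :=
  stmt_1_general lcom rsym metab
end

section
/- In any metabelian Novikov algebra A, for all a,b,c,d,e in A, the element a*(b*((c*d)*e)) equals 0. -/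
theorem stmt_3_general
    {A : Type*} [NonUnitalNonAssocRing A]
    (lcom : ∀ a b c : A, a*(b*c) = b*(a*c))
    (metab : ∀ a b c d : A, (a*b)*(c*d) = 0) :
    ∀ a b c d e : A, a*(b*((c*d)*e)) = 0 := by
  intro a b c d e
  rw [lcom b (c*d) e, lcom a (c*d) (b*e), metab c d a (b*e)]

/-- Setting: a nonassociative (nonunital) algebra over a field of characteristic 0. -/
theorem stmt_3 {K : Type*} [Field K] [CharZero K]
    {A : Type*} [NonUnitalNonAssocRing A] [Module K A]
    [SMulCommClass K A A] [IsScalarTower K A A]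
    (lcom : ∀ a b c : A, a*(b*c) = b*(a*c))
    (rsym : ∀ a b c : A, (a*b)*c - a*(b*c) = (a*c)*b - a*(c*b))
    (metab : ∀ a b c d : A, (a*b)*(c*d) = 0) :
    ∀ a b c d e : A, a*(b*((c*d)*e)) = 0 :=
  stmt_3_general lcom metab
end

section
/- In any metabelian Novikov algebra A, for all a,b,c,d,e in A, the element ((a*(b*c))*d)*e equals 0. -/
/-!
Every element of the form `x * (y * z)` anticommutes with all of `A`: right symmetry expresses
`(x * (y * z)) * w` through `x * ((y * z) * w)`, `(x * w) * (y * z)` and `x * (w * (y * z))`,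
and left commutativity plus metabelianity kill the first two. Applying this twice moves `d` and
`e` to the left of `a * (b * c)`, after which left commutativity produces
`(a * (b * c)) * (d * e) = 0`.
-/

theorem mul_mul_mul_anticomm {A : Type*} [NonUnitalNonAssocRing A]
    (lcom : ∀ a b c : A, a * (b * c) = b * (a * c))
    (rsym : ∀ a b c : A, (a * b) * c - a * (b * c) = (a * c) * b - a * (c * b))
    (metab : ∀ a b c d : A, (a * b) * (c * d) = 0) (x y z w : A) :
    (x * (y * z)) * w = -(w * (x * (y * z))) := by
  have h := rsym x (y * z) w
  rw [lcom x (y * z) w, metab y z x w, metab x w y z, lcom x w (y * z)] at h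
  simpa using h

theorem stmt_4_general
    {A : Type*} [NonUnitalNonAssocRing A]
    (lcom : ∀ a b c : A, a*(b*c) = b*(a*c))
    (rsym : ∀ a b c : A, (a*b)*c - a*(b*c) = (a*c)*b - a*(c*b))
    (metab : ∀ a b c d : A, (a*b)*(c*d) = 0) :
    ∀ a b c d e : A, ((a*(b*c))*d)*e = 0 := by
  intro a b c d e
  have anticomm := mul_mul_mul_anticomm lcom rsym metab
  calc ((a * (b * c)) * d) * e
      = -((a * (d * (b * c))) * e) := by rw [anticomm, neg_mul, lcom d a]
    _ = e * (d * (a * (b * c))) := by rw [anticomm, neg_neg, lcom d a]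
    _ = -(d * ((a * (b * c)) * e)) := by rw [lcom e d, anticomm a b c e, mul_neg, neg_neg]
    _ = 0 := by rw [lcom d, metab, neg_zero]

/-- Setting: a nonassociative (nonunital) algebra over a field of characteristic 0. -/
theorem stmt_4 {K : Type*} [Field K] [CharZero K]
    {A : Type*} [NonUnitalNonAssocRing A] [Module K A]
    [SMulCommClass K A A] [IsScalarTower K A A]
    (lcom : ∀ a b c : A, a*(b*c) = b*(a*c))
    (rsym : ∀ a b c : A, (a*b)*c - a*(b*c) = (a*c)*b - a*(c*b))
    (metab : ∀ a b c d : A, (a*b)*(c*d) = 0) :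
    ∀ a b c d e : A, ((a*(b*c))*d)*e = 0 :=
  stmt_4_general lcom rsym metab
end

section
/- In any metabelian Novikov algebra A, for all a,b,c,d,e in A, the element (a*((b*c)*d))*e equals 0. -/
theorem stmt_5_general
    {A : Type*} [NonUnitalNonAssocRing A]
    (lcom : ∀ a b c : A, a*(b*c) = b*(a*c))
    (rsym : ∀ a b c : A, (a*b)*c - a*(b*c) = (a*c)*b - a*(c*b))
    (metab : ∀ a b c d : A, (a*b)*(c*d) = 0) :
    ∀ a b c d e : A, (a*((b*c)*d))*e = 0 := by
  intro a b c d e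
  -- Apply right symmetry to (a, x, e): after left commutativity the other three terms are products of two products.
  set x := (b * c) * d
  have h_right : a * (x * e) = 0 := by rw [lcom, metab]
  have h_swap : (a * e) * x = 0 := metab a e (b * c) d
  have h_inner : a * (e * x) = 0 := by rw [lcom e, metab, mul_zero]
  simpa [h_right, h_swap, h_inner] using rsym a x e

/-- Setting: a nonassociative (nonunital) algebra over a field of characteristic 0. -/
theorem stmt_5 {K : Type*} [Field K] [CharZero K]
    {A : Type*} [NonUnitalNonAssocRing A] [Module K A]
    [SMulCommClass K A A] [IsScalarTower K A A]
    (lcom : ∀ a b c : A, a*(b*c) = b*(a*c))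
    (rsym : ∀ a b c : A, (a*b)*c - a*(b*c) = (a*c)*b - a*(c*b))
    (metab : ∀ a b c d : A, (a*b)*(c*d) = 0) :
    ∀ a b c d e : A, (a*((b*c)*d))*e = 0 :=
  stmt_5_general lcom rsym metab
end

section
/- In any metabelian Novikov algebra A, for all a,b,c,d,e in A, the element (a*(b*(c*d)))*e equals 0. -/
/-!
Left commutativity turns `y((pq)r)` into `(pq)(yr)`, which vanishes by metabelianity. Applying
`b(·)` to the right-symmetry identity for `c, d, e` shows that `b(c(de))` is symmetric in
`d, e`, and the right-symmetry identity for `b, cd, e` becomes `(b(cd))e = -b(c(de))`.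
Replacing `d` by `cd` gives `(a(b(cd)))e = -a(b((cd)e))`, and `b((cd)e) = 0`.
-/

namespace Novikov

variable {A : Type*} [NonUnitalNonAssocRing A]

theorem mul_mul_mul_eq_zero (lcom : ∀ a b c : A, a * (b * c) = b * (a * c))
    (metab : ∀ a b c d : A, (a * b) * (c * d) = 0) (y p q r : A) :
    y * ((p * q) * r) = 0 := by
  rw [← lcom, metab]

theorem mul_mul_mul_comm_inner (lcom : ∀ a b c : A, a * (b * c) = b * (a * c))
    (rsym : ∀ a b c : A, (a * b) * c - a * (b * c) = (a * c) * b - a * (c * b))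
    (metab : ∀ a b c d : A, (a * b) * (c * d) = 0) (b c d e : A) :
    b * (c * (d * e)) = b * (c * (e * d)) := by
  have h := congrArg (b * ·) (rsym c d e)
  simpa only [mul_sub, mul_mul_mul_eq_zero lcom metab, zero_sub, neg_inj] using h

theorem mul_mul_mul_eq_neg (lcom : ∀ a b c : A, a * (b * c) = b * (a * c))
    (rsym : ∀ a b c : A, (a * b) * c - a * (b * c) = (a * c) * b - a * (c * b))
    (metab : ∀ a b c d : A, (a * b) * (c * d) = 0) (b c d e : A) :
    (b * (c * d)) * e = -(b * (c * (d * e))) := by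
  have h := rsym b (c * d) e
  rwa [mul_mul_mul_eq_zero lcom metab, metab, lcom e c d,
    ← mul_mul_mul_comm_inner lcom rsym metab, sub_zero, zero_sub] at h

end Novikov

theorem stmt_6_general
    {A : Type*} [NonUnitalNonAssocRing A]
    (lcom : ∀ a b c : A, a*(b*c) = b*(a*c))
    (rsym : ∀ a b c : A, (a*b)*c - a*(b*c) = (a*c)*b - a*(c*b))
    (metab : ∀ a b c d : A, (a*b)*(c*d) = 0) :
    ∀ a b c d e : A, (a*(b*(c*d)))*e = 0 := by
  intro a b c d e
  rw [Novikov.mul_mul_mul_eq_neg lcom rsym metab, Novikov.mul_mul_mul_eq_zero lcom metab,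
    mul_zero, neg_zero]

/-- Setting: a nonassociative (nonunital) algebra over a field of characteristic 0. -/
theorem stmt_6 {K : Type*} [Field K] [CharZero K]
    {A : Type*} [NonUnitalNonAssocRing A] [Module K A]
    [SMulCommClass K A A] [IsScalarTower K A A]
    (lcom : ∀ a b c : A, a*(b*c) = b*(a*c))
    (rsym : ∀ a b c : A, (a*b)*c - a*(b*c) = (a*c)*b - a*(c*b))
    (metab : ∀ a b c d : A, (a*b)*(c*d) = 0) :
    ∀ a b c d e : A, (a*(b*(c*d)))*e = 0 :=
  stmt_6_general lcom rsym metab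
end

section
/- In any metabelian Novikov algebra A, left-normed monomials of degree at least 5 allow commuting of any two adjacent non-leading factors: for all a, x_2, ..., x_n in A with n ≥ 5 and any index 2 ≤ m ≤ n-1, the left-normed product (...((a*x_2)*x_3)...)*x_n equals the left-normed product with x_m and x_{m+1} interchanged; in particular, for all a,b,c,d,e in A, (((a*b)*c)*d)*e = (((a*c)*b)*d)*e. -/
/-- Setting: a nonassociative (nonunital) algebra over a field of characteristic 0. -/
theorem stmt_7 {K : Type*} [Field K] [CharZero K]
    {A : Type*} [NonUnitalNonAssocRing A] [Module K A]
    [SMulCommClass K A A] [IsScalarTower K A A]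
    (lcom : ∀ a b c : A, a*(b*c) = b*(a*c))
    (rsym : ∀ a b c : A, (a*b)*c - a*(b*c) = (a*c)*b - a*(c*b))
    (metab : ∀ a b c d : A, (a*b)*(c*d) = 0) :
    ∀ (a b c : A) (l₁ l₂ : List A), 2 ≤ l₁.length + l₂.length →
      l₂.foldl (· * ·) (((l₁.foldl (· * ·) a) * b) * c)
        = l₂.foldl (· * ·) (((l₁.foldl (· * ·) a) * c) * b) := by
  -- x * ((y*z) * w) = 0
  have L0 : ∀ x y z w : A, x * ((y*z) * w) = 0 := by
    intro x y z w
    rw [lcom x (y*z) w, metab y z x w]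
  -- (x*(u*v))*d = x*((u*v)*d) - d*(x*(u*v))
  have PP : ∀ x d u v : A, (x*(u*v))*d = x*((u*v)*d) - d*(x*(u*v)) := by
    intro x d u v
    have h := rsym x (u*v) d
    rw [metab x d u v, lcom x d (u*v)] at h
    linear_combination (norm := abel1) h
  -- (x*(u*v))*d = -(d*(x*(u*v)))
  have PN : ∀ x d u v : A, (x*(u*v))*d = -(d*(x*(u*v))) := by
    intro x d u v
    rw [PP x d u v, L0 x u v d, zero_sub]
  -- x*(y*(b*c)) = x*(y*(c*b))
  have K : ∀ x y p q : A, x*(y*(p*q)) = x*(y*(q*p)) := by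
    intro x y p q
    have h : y*(p*q) = y*(q*p) + ((y*p)*q - (y*q)*p) := by
      linear_combination (norm := abel1) -rsym y p q
    have z1 : x*((y*p)*q) = 0 := L0 x y p q
    have z2 : x*((y*q)*p) = 0 := L0 x y q p
    rw [h, mul_add, mul_sub, z1, z2, sub_zero, add_zero]
  -- ((x*(u*v))*d)*e = d*(e*(x*(u*v))) + e*(d*(x*(u*v)))
  have UD : ∀ x d e u v : A, ((x*(u*v))*d)*e
      = d*(e*(x*(u*v))) + e*(d*(x*(u*v))) := by
    intro x d e u v
    rw [PN x d u v, neg_mul, PP d e x (u*v), PN x e u v, mul_neg]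
    abel
  -- the degree-5 core identity
  have H5 : ∀ a b c d e : A, (((a*b)*c)*d)*e = (((a*c)*b)*d)*e := by
    intro a b c d e
    have h1 : (a*b)*c = (a*c)*b + (a*(b*c) - a*(c*b)) := by
      linear_combination (norm := abel1) rsym a b c
    have h2 : ((a*(b*c))*d)*e = ((a*(c*b))*d)*e := by
      rw [UD a d e b c, UD a d e c b, K e a b c, K d a b c]
    calc (((a*b)*c)*d)*e
        = ((((a*c)*b)*d)*e + (((a*(b*c))*d)*e - ((a*(c*b))*d)*e)) := by
          rw [h1]; rw [add_mul, sub_mul, add_mul, sub_mul]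
      _ = (((a*c)*b)*d)*e := by rw [h2]; abel
  -- a fold starting from a product is a product
  have prodfold : ∀ (l : List A) (u v : A),
      ∃ s t : A, l.foldl (· * ·) (u*v) = s*t := by
    intro l
    induction l with
    | nil => intro u v; exact ⟨u, v, rfl⟩
    | cons w l ih =>
        intro u v
        obtain ⟨s, t, h⟩ := ih (u*v) w
        exact ⟨s, t, by simpa using h⟩
  -- products absorb the swap directly
  have prodswap : ∀ s t p q : A, ((s*t)*p)*q = ((s*t)*q)*p := by
    intro s t p q
    have h := rsym (s*t) p q
    rw [metab s t p q, metab s t q p] at h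
    linear_combination (norm := abel1) h
  intro a b c l₁ l₂ hlen
  cases l₁ with
  | cons x xs =>
      have hx : ((x::xs : List A).foldl (· * ·) a * b) * c
          = ((x::xs : List A).foldl (· * ·) a * c) * b := by
        obtain ⟨s, t, hst⟩ := prodfold xs a x
        have : (x::xs : List A).foldl (· * ·) a = s * t := by simpa using hst
        rw [this]
        exact prodswap s t b c
      rw [hx]
  | nil =>
      simp only [List.length_nil, Nat.zero_add] at hlen
      match l₂, hlen with
      | d :: e :: rest, _ =>
          simp only [List.foldl_nil, List.foldl_cons]
          rw [H5 a b c d e]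
end

section
/- In any metabelian Novikov algebra A, for all a,b,c,d,e in A, (((a*b)*c)*d)*e = (((a*b)*d)*c)*e and (((a*b)*c)*d)*e = (((a*b)*c)*e)*d. -/
/-- Both associators in the right-symmetry identity vanish when their left argument is a product. -/
theorem mul_mul_right_comm_of_metabelian {A : Type*} [NonUnitalNonAssocRing A]
    (rsym : ∀ a b c : A, (a*b)*c - a*(b*c) = (a*c)*b - a*(c*b))
    (metab : ∀ a b c d : A, (a*b)*(c*d) = 0) (a b c d : A) :
    ((a*b)*c)*d = ((a*b)*d)*c := by
  have h := rsym (a*b) c d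
  rwa [metab a b c d, metab a b d c, sub_zero, sub_zero] at h

theorem stmt_9_general
    {A : Type*} [NonUnitalNonAssocRing A]
    (rsym : ∀ a b c : A, (a*b)*c - a*(b*c) = (a*c)*b - a*(c*b))
    (metab : ∀ a b c d : A, (a*b)*(c*d) = 0) :
    ∀ a b c d e : A, (((a*b)*c)*d)*e = (((a*b)*d)*c)*e ∧
      (((a*b)*c)*d)*e = (((a*b)*c)*e)*d := by
  intro a b c d e
  exact ⟨by rw [mul_mul_right_comm_of_metabelian rsym metab a b c d],
    mul_mul_right_comm_of_metabelian rsym metab (a*b) c d e⟩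

/-- Setting: a nonassociative (nonunital) algebra over a field of characteristic 0. -/
theorem stmt_9 {K : Type*} [Field K] [CharZero K]
    {A : Type*} [NonUnitalNonAssocRing A] [Module K A]
    [SMulCommClass K A A] [IsScalarTower K A A]
    (lcom : ∀ a b c : A, a*(b*c) = b*(a*c))
    (rsym : ∀ a b c : A, (a*b)*c - a*(b*c) = (a*c)*b - a*(c*b))
    (metab : ∀ a b c d : A, (a*b)*(c*d) = 0) :
    ∀ a b c d e : A, (((a*b)*c)*d)*e = (((a*b)*d)*c)*e ∧
      (((a*b)*c)*d)*e = (((a*b)*c)*e)*d :=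
  stmt_9_general rsym metab
end

section
/- Let A be a metabelian Lie-admissible algebra with commutator [a,b] = a*b - b*a. Then for all a,b,c,d in A, [[[a,b],c],d] = [[[a,b],d],c]. -/
/-!
Apply the Jacobi identity of the commutator to `[a,b]`, `c`, `d`. Its middle term
`[[c,d],[a,b]]` is a combination of products of two products, hence vanishes in a
metabelian algebra, and the remaining two terms are `[[[a,b],c],d]` and `-[[[a,b],d],c]`.
-/

namespace NonAssocCommutator

variable {A : Type*} [NonUnitalNonAssocRing A]

def bracket (a b : A) : A := a * b - b * a

theorem bracket_swap (a b : A) : bracket a b = -bracket b a := by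
  simp only [bracket, neg_sub]

theorem bracket_neg_left (a b : A) : bracket (-a) b = -bracket a b := by
  simp only [bracket, neg_mul, mul_neg]
  abel

theorem jacobi_eq_expanded (a b c : A) :
    bracket (bracket a b) c + bracket (bracket b c) a + bracket (bracket c a) b =
      (a*b)*c - (b*a)*c - c*(a*b) + c*(b*a) + (b*c)*a - (c*b)*a - a*(b*c)
        + a*(c*b) + (c*a)*b - (a*c)*b - b*(c*a) + b*(a*c) := by
  simp only [bracket, sub_mul, mul_sub]
  abel

theorem bracket_bracket_bracket_eq_zero (metab : ∀ a b c d : A, (a*b)*(c*d) = 0)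
    (a b c d : A) : bracket (bracket a b) (bracket c d) = 0 := by
  simp only [bracket, sub_mul, mul_sub, metab, sub_self]

end NonAssocCommutator

open NonAssocCommutator in
theorem stmt_11_general
    {A : Type*} [NonUnitalNonAssocRing A]
    (lie_adm : ∀ a b c : A,
      (a*b)*c - (b*a)*c - c*(a*b) + c*(b*a) + (b*c)*a - (c*b)*a - a*(b*c)
        + a*(c*b) + (c*a)*b - (a*c)*b - b*(c*a) + b*(a*c) = 0)
    (metab : ∀ a b c d : A, (a*b)*(c*d) = 0) :
    let lb : A → A → A := fun a b : A => a*b - b*a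
    ∀ a b c d : A, lb (lb (lb a b) c) d = lb (lb (lb a b) d) c := by
  intro lb a b c d
  have jacobi := (jacobi_eq_expanded (bracket a b) c d).trans (lie_adm _ c d)
  rw [bracket_bracket_bracket_eq_zero metab, bracket_swap d, bracket_neg_left] at jacobi
  change bracket (bracket (bracket a b) c) d = bracket (bracket (bracket a b) d) c
  linear_combination (norm := abel1) jacobi

/-- Setting: a nonassociative (nonunital) algebra over a field of characteristic 0. -/
theorem stmt_11 {K : Type*} [Field K] [CharZero K]
    {A : Type*} [NonUnitalNonAssocRing A] [Module K A]
    [SMulCommClass K A A] [IsScalarTower K A A]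
    (lie_adm : ∀ a b c : A,
      (a*b)*c - (b*a)*c - c*(a*b) + c*(b*a) + (b*c)*a - (c*b)*a - a*(b*c)
        + a*(c*b) + (c*a)*b - (a*c)*b - b*(c*a) + b*(a*c) = 0)
    (metab : ∀ a b c d : A, (a*b)*(c*d) = 0) :
    let lb : A → A → A := fun a b : A => a*b - b*a
    ∀ a b c d : A, lb (lb (lb a b) c) d = lb (lb (lb a b) d) c :=
  stmt_11_general lie_adm metab
end

section
/- Let A be a metabelian Lie-admissible algebra with [a,b] = a*b - b*a and {a,b} = a*b + b*a. Then for all a,b,c,d in A, [[{a,b},c],d] = [[{a,b},d],c]. -/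
/-!
The Jacobi identity for the commutator gives `[[x,c],d] - [[x,d],c] = [x,[c,d]]`. For
`x = {a,b}` both `x` and `[c,d]` are sums of products, so in a metabelian algebra their
commutator vanishes.
-/

section

variable {A : Type*} [NonUnitalNonAssocRing A]

theorem commutator_sub_commutator_of_jacobi
    (jacobi : ∀ a b c : A,
      (a*b)*c - (b*a)*c - c*(a*b) + c*(b*a) + (b*c)*a - (c*b)*a - a*(b*c)
        + a*(c*b) + (c*a)*b - (a*c)*b - b*(c*a) + b*(a*c) = 0)
    (x c d : A) :
    ((x*c - c*x)*d - d*(x*c - c*x)) - ((x*d - d*x)*c - c*(x*d - d*x))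
      = x*(c*d - d*c) - (c*d - d*c)*x := by
  linear_combination (norm := noncomm_ring) jacobi x c d

theorem commutator_anticommutator_commutator_eq_zero_of_metabelian
    (metab : ∀ a b c d : A, (a*b)*(c*d) = 0) (a b c d : A) :
    (a*b + b*a)*(c*d - d*c) - (c*d - d*c)*(a*b + b*a) = 0 := by
  simp only [mul_add, add_mul, mul_sub, sub_mul, metab, sub_zero, add_zero]

end

theorem stmt_12_general
    {A : Type*} [NonUnitalNonAssocRing A]
    (lie_adm : ∀ a b c : A,
      (a*b)*c - (b*a)*c - c*(a*b) + c*(b*a) + (b*c)*a - (c*b)*a - a*(b*c)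
        + a*(c*b) + (c*a)*b - (a*c)*b - b*(c*a) + b*(a*c) = 0)
    (metab : ∀ a b c d : A, (a*b)*(c*d) = 0) :
    let lb : A → A → A := fun a b : A => a*b - b*a
    let jb : A → A → A := fun a b : A => a*b + b*a
    ∀ a b c d : A, lb (lb (jb a b) c) d = lb (lb (jb a b) d) c := by
  intro lb jb a b c d
  rw [← sub_eq_zero]
  exact (commutator_sub_commutator_of_jacobi lie_adm (a*b + b*a) c d).trans
    (commutator_anticommutator_commutator_eq_zero_of_metabelian metab a b c d)

/-- Setting: a nonassociative (nonunital) algebra over a field of characteristic 0. -/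
theorem stmt_12 {K : Type*} [Field K] [CharZero K]
    {A : Type*} [NonUnitalNonAssocRing A] [Module K A]
    [SMulCommClass K A A] [IsScalarTower K A A]
    (lie_adm : ∀ a b c : A,
      (a*b)*c - (b*a)*c - c*(a*b) + c*(b*a) + (b*c)*a - (c*b)*a - a*(b*c)
        + a*(c*b) + (c*a)*b - (a*c)*b - b*(c*a) + b*(a*c) = 0)
    (metab : ∀ a b c d : A, (a*b)*(c*d) = 0) :
    let lb : A → A → A := fun a b : A => a*b - b*a
    let jb : A → A → A := fun a b : A => a*b + b*a
    ∀ a b c d : A, lb (lb (jb a b) c) d = lb (lb (jb a b) d) c :=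
  stmt_12_general lie_adm metab
end

section
/- In any metabelian Novikov algebra A, the polynomial p(a,b,c) = b*(a*c) + c*(b*a) + c*(a*b) is symmetric in its three arguments: for every permutation σ of {a,b,c}, p(σ(a),σ(b),σ(c)) = p(a,b,c). -/
/-!
Left commutativity `a(bc) = b(ac)` makes `p` invariant under swapping its first two and under
swapping its last two arguments, and these adjacent transpositions generate `S₃`.
-/

open Equiv

theorem Equiv.Perm.comp_perm_invariant_of_comp_swap_invariant {α β : Type*} {n : ℕ}
    (F : (Fin (n + 1) → α) → β)
    (hswap : ∀ (i : Fin n) (x : Fin (n + 1) → α), F (x ∘ swap i.castSucc i.succ) = F x)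
    (σ : Perm (Fin (n + 1))) (x : Fin (n + 1) → α) : F (x ∘ σ) = F x := by
  have hσ : σ ∈ Submonoid.closure (Set.range fun i : Fin n ↦ swap i.castSucc i.succ) := by
    rw [Perm.mclosure_swap_castSucc_succ]; trivial
  induction hσ using Submonoid.closure_induction generalizing x with
  | mem _ hτ =>
    obtain ⟨i, rfl⟩ := hτ
    exact hswap i x
  | one => rfl
  | mul τ ρ _ _ ihτ ihρ =>
    rw [Perm.coe_mul, ← Function.comp_assoc, ihρ, ihτ]

section LeftCommutative

variable {A : Type*} [Mul A] [AddCommSemigroup A]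

def novikovPoly (a b c : A) : A := b * (a * c) + c * (b * a) + c * (a * b)

theorem novikovPoly_swap₁₂ (lcom : ∀ a b c : A, a * (b * c) = b * (a * c)) (a b c : A) :
    novikovPoly b a c = novikovPoly a b c := by
  rw [novikovPoly, novikovPoly, lcom a b c]
  ac_rfl

theorem novikovPoly_swap₂₃ (lcom : ∀ a b c : A, a * (b * c) = b * (a * c)) (a b c : A) :
    novikovPoly a c b = novikovPoly a b c := by
  rw [novikovPoly, novikovPoly, lcom c b a]
  ac_rfl

theorem novikovPoly_perm (lcom : ∀ a b c : A, a * (b * c) = b * (a * c))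
    (x : Fin 3 → A) (σ : Perm (Fin 3)) :
    novikovPoly (x (σ 0)) (x (σ 1)) (x (σ 2)) = novikovPoly (x 0) (x 1) (x 2) := by
  refine Perm.comp_perm_invariant_of_comp_swap_invariant
    (fun y ↦ novikovPoly (y 0) (y 1) (y 2)) (fun i y ↦ ?_) σ x
  fin_cases i
  · exact novikovPoly_swap₁₂ lcom _ _ _
  · exact novikovPoly_swap₂₃ lcom _ _ _

end LeftCommutative

theorem stmt_14_general {A : Type*} [NonUnitalNonAssocRing A]
    (lcom : ∀ a b c : A, a*(b*c) = b*(a*c)) :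
    let p : A → A → A → A := fun a b c : A => b*(a*c) + c*(b*a) + c*(a*b)
    ∀ (x : Fin 3 → A) (σ : Equiv.Perm (Fin 3)),
      p (x (σ 0)) (x (σ 1)) (x (σ 2)) = p (x 0) (x 1) (x 2) :=
  novikovPoly_perm lcom

/-- Setting: a nonassociative (nonunital) algebra over a field of characteristic 0. -/
theorem stmt_14 {K : Type*} [Field K] [CharZero K]
    {A : Type*} [NonUnitalNonAssocRing A] [Module K A]
    [SMulCommClass K A A] [IsScalarTower K A A]
    (lcom : ∀ a b c : A, a*(b*c) = b*(a*c))
    (rsym : ∀ a b c : A, (a*b)*c - a*(b*c) = (a*c)*b - a*(c*b))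
    (metab : ∀ a b c d : A, (a*b)*(c*d) = 0) :
    let p : A → A → A → A := fun a b c : A => b*(a*c) + c*(b*a) + c*(a*b)
    ∀ (x : Fin 3 → A) (σ : Equiv.Perm (Fin 3)),
      p (x (σ 0)) (x (σ 1)) (x (σ 2)) = p (x 0) (x 1) (x 2) :=
  stmt_14_general lcom
end

section
/- In any metabelian Novikov algebra A, the polynomial r(a,b,c,d) = ((a*b)*c)*d + ((b*a)*c)*d + ((c*a)*b)*d + ((d*a)*b)*c is symmetric in its four arguments. -/
/-!
In a metabelian Novikov algebra every degree-four monomial `((a*b)*c)*d` is symmetric in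
`b, c, d`: right symmetry kills all associators whose entries contain a product, so it reduces to
`((a*b)*c)*d = ((a*c)*b)*d`, and the defect `(a*(b*c) - a*(c*b))*d` of that identity is
`-d*(a*(b*c) - a*(c*b))`, which vanishes because left multiplication annihilates `(A*A)*A`.
Hence `r(a,b,c,d)` is the sum, over the four choices of a first factor, of a monomial symmetric in
the remaining three arguments, and is therefore symmetric.
-/

open Equiv

theorem Equiv.Perm.comp_invariant_of_adjacent_swap {n : ℕ} {α β : Type*}
    (f : (Fin (n + 1) → α) → β)
    (h : ∀ (i : Fin n) (x : Fin (n + 1) → α), f (x ∘ swap i.castSucc i.succ) = f x)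
    (σ : Perm (Fin (n + 1))) (x : Fin (n + 1) → α) : f (x ∘ σ) = f x := by
  have hσ : σ ∈ Submonoid.closure (Set.range fun i : Fin n ↦ swap i.castSucc i.succ) := by
    rw [Perm.mclosure_swap_castSucc_succ]; trivial
  induction hσ using Submonoid.closure_induction generalizing x with
  | mem τ hτ => obtain ⟨i, rfl⟩ := hτ; exact h i x
  | one => rfl
  | mul σ τ _ _ hσ hτ => exact (hτ (x ∘ σ)).trans (hσ x)

structure IsMetabelianNovikov (A : Type*) [NonUnitalNonAssocRing A] : Prop where
  left_comm : ∀ a b c : A, a * (b * c) = b * (a * c)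
  right_symm : ∀ a b c : A, (a * b) * c - a * (b * c) = (a * c) * b - a * (c * b)
  metabelian : ∀ a b c d : A, (a * b) * (c * d) = 0

def novikovR {A : Type*} [NonUnitalNonAssocRing A] (a b c d : A) : A :=
  ((a * b) * c) * d + ((b * a) * c) * d + ((c * a) * b) * d + ((d * a) * b) * c

namespace IsMetabelianNovikov

variable {A : Type*} [NonUnitalNonAssocRing A] (hA : IsMetabelianNovikov A)
include hA

theorem mul_mul_mul_eq_zero (a x y z : A) : a * ((x * y) * z) = 0 := by
  rw [hA.left_comm, hA.metabelian]

theorem mul_mul_mul_right_comm (x y z w : A) : ((x * y) * z) * w = ((x * y) * w) * z := by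
  simpa only [hA.metabelian, sub_zero] using hA.right_symm (x * y) z w

theorem mul_mul_mul_eq_neg (a b c d : A) : (a * (b * c)) * d = -(a * (d * (b * c))) := by
  simpa only [hA.mul_mul_mul_eq_zero, hA.metabelian, sub_zero, zero_sub]
    using hA.right_symm a (b * c) d

theorem mul_sub_mul_eq (a b c : A) : a * (b * c) - a * (c * b) = (a * b) * c - (a * c) * b := by
  linear_combination (norm := abel) -hA.right_symm a b c

theorem mul_mul_right_comm_mul (a b c d : A) : ((a * b) * c) * d = ((a * c) * b) * d := by
  rw [← sub_eq_zero]
  calc ((a * b) * c) * d - ((a * c) * b) * d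
      = (a * (b * c) - a * (c * b)) * d := by rw [← sub_mul, hA.mul_sub_mul_eq]
    _ = -(d * (a * (b * c) - a * (c * b))) := by
        rw [sub_mul, hA.mul_mul_mul_eq_neg, hA.mul_mul_mul_eq_neg, mul_sub,
          hA.left_comm a d, hA.left_comm a d]
        abel
    _ = 0 := by
        rw [hA.mul_sub_mul_eq, mul_sub, hA.mul_mul_mul_eq_zero, hA.mul_mul_mul_eq_zero]
        abel

theorem novikovR_swap_01 (a b c d : A) : novikovR a b c d = novikovR b a c d := by
  rw [novikovR, novikovR, hA.mul_mul_right_comm_mul c a b, hA.mul_mul_right_comm_mul d a b]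
  abel

theorem novikovR_swap_12 (a b c d : A) : novikovR a b c d = novikovR a c b d := by
  rw [novikovR, novikovR, hA.mul_mul_right_comm_mul a b c, hA.mul_mul_mul_right_comm d a b]
  abel

theorem novikovR_swap_23 (a b c d : A) : novikovR a b c d = novikovR a b d c := by
  rw [novikovR, novikovR, hA.mul_mul_mul_right_comm a b c, hA.mul_mul_mul_right_comm b a c]
  abel

theorem novikovR_perm (x : Fin 4 → A) (σ : Perm (Fin 4)) :
    novikovR (x (σ 0)) (x (σ 1)) (x (σ 2)) (x (σ 3)) = novikovR (x 0) (x 1) (x 2) (x 3) := by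
  refine Perm.comp_invariant_of_adjacent_swap (fun y ↦ novikovR (y 0) (y 1) (y 2) (y 3))
    (fun i y ↦ ?_) σ x
  fin_cases i
  · exact (hA.novikovR_swap_01 (y 0) (y 1) (y 2) (y 3)).symm
  · exact (hA.novikovR_swap_12 (y 0) (y 1) (y 2) (y 3)).symm
  · exact (hA.novikovR_swap_23 (y 0) (y 1) (y 2) (y 3)).symm

end IsMetabelianNovikov

theorem stmt_16_general
    {A : Type*} [NonUnitalNonAssocRing A]
    (lcom : ∀ a b c : A, a*(b*c) = b*(a*c))
    (rsym : ∀ a b c : A, (a*b)*c - a*(b*c) = (a*c)*b - a*(c*b))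
    (metab : ∀ a b c d : A, (a*b)*(c*d) = 0) :
    let p : A → A → A → A → A := fun a b c d : A => ((a*b)*c)*d + ((b*a)*c)*d + ((c*a)*b)*d + ((d*a)*b)*c
    ∀ (x : Fin 4 → A) (σ : Equiv.Perm (Fin 4)),
      p (x (σ 0)) (x (σ 1)) (x (σ 2)) (x (σ 3)) = p (x 0) (x 1) (x 2) (x 3) :=
  IsMetabelianNovikov.novikovR_perm ⟨lcom, rsym, metab⟩

/-- Setting: a nonassociative (nonunital) algebra over a field of characteristic 0. -/
theorem stmt_16 {K : Type*} [Field K] [CharZero K]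
    {A : Type*} [NonUnitalNonAssocRing A] [Module K A]
    [SMulCommClass K A A] [IsScalarTower K A A]
    (lcom : ∀ a b c : A, a*(b*c) = b*(a*c))
    (rsym : ∀ a b c : A, (a*b)*c - a*(b*c) = (a*c)*b - a*(c*b))
    (metab : ∀ a b c d : A, (a*b)*(c*d) = 0) :
    let p : A → A → A → A → A := fun a b c d : A => ((a*b)*c)*d + ((b*a)*c)*d + ((c*a)*b)*d + ((d*a)*b)*c
    ∀ (x : Fin 4 → A) (σ : Equiv.Perm (Fin 4)),
      p (x (σ 0)) (x (σ 1)) (x (σ 2)) (x (σ 3)) = p (x 0) (x 1) (x 2) (x 3) :=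
  stmt_16_general lcom rsym metab
end

section
/- In any metabelian Novikov algebra A, the polynomial a*(b*(c*d)) is symmetric in its four arguments: for all a,b,c,d in A and any permutation of (a,b,c,d), the value of a*(b*(c*d)) is unchanged. -/
/-- Setting: a nonassociative (nonunital) algebra over a field of characteristic 0. -/
theorem stmt_17 {K : Type*} [Field K] [CharZero K]
    {A : Type*} [NonUnitalNonAssocRing A] [Module K A]
    [SMulCommClass K A A] [IsScalarTower K A A]
    (lcom : ∀ a b c : A, a*(b*c) = b*(a*c))
    (rsym : ∀ a b c : A, (a*b)*c - a*(b*c) = (a*c)*b - a*(c*b))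
    (metab : ∀ a b c d : A, (a*b)*(c*d) = 0) :
    let p : A → A → A → A → A := fun a b c d : A => a*(b*(c*d))
    ∀ (x : Fin 4 → A) (σ : Equiv.Perm (Fin 4)),
      p (x (σ 0)) (x (σ 1)) (x (σ 2)) (x (σ 3)) = p (x 0) (x 1) (x 2) (x 3) := by
  intro p x σ
  have h12 : ∀ a b c d : A, p a b c d = p b a c d := fun a b c d => lcom a b (c*d)
  have h23 : ∀ a b c d : A, p a b c d = p a c b d := fun a b c d =>
    congrArg (a * ·) (lcom b c d)
  have h34 : ∀ a b c d : A, p a b c d = p a b d c := by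
    intro a b c d
    have h1 : a * ((b*c)*d) = 0 := by rw [lcom a (b*c) d, metab]
    have h2 : a * ((b*d)*c) = 0 := by rw [lcom a (b*d) c, metab]
    have h := congrArg (a * ·) (rsym b c d)
    simp only [mul_sub, h1, h2, zero_sub] at h
    exact neg_injective h
  have key : ∀ (y : Fin 4 → A) (i j : Fin 4),
      p (y (Equiv.swap i j 0)) (y (Equiv.swap i j 1)) (y (Equiv.swap i j 2))
        (y (Equiv.swap i j 3)) = p (y 0) (y 1) (y 2) (y 3) := by
    intro y i j
    fin_cases i <;> fin_cases j <;>
      simp (config := { decide := true }) only [Equiv.swap_apply_def, if_true, if_false] <;>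
      solve
        | rfl
        | (rw [h12]; rfl)
        | (rw [h23]; rfl)
        | (rw [h34]; rfl)
        | (rw [h12, h23, h12]; rfl)
        | (rw [h23, h34, h23]; rfl)
        | (rw [h12, h23, h34, h23, h12]; rfl)
  induction σ using Equiv.Perm.swap_induction_on generalizing x
  case one => rfl
  case swap_mul σ i j hij IH =>
    have hx := IH (x ∘ Equiv.swap i j)
    simp only [Function.comp_apply] at hx
    simp only [Equiv.Perm.mul_apply]
    rw [hx]
    exact key x i j
end
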